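/- arXiv:2209.09321 — 6 statements merged into one kernel-verified Lean document; each statement's English description precedes it below -/
import Mathlib

section
/- Let Z1 = {c1 + G1·α : α ∈ [-1,1]^{p1}} and Z2 = {c2 + G2·α : α ∈ [-1,1]^{p2}} be zonotopes in ℝ^n with p2 ≥ p1. Write G2' ∈ ℝ^{n×p1} for the first p1 columns of G2 and G2'' ∈ ℝ^{n×(p2−p1)} for the remaining columns. Then the linear combination linComb(Z1,Z2) = {λ·s1 + (1−λ)·s2 : s1 ∈ Z1, s2 ∈ Z2, λ ∈ [0,1]} is contained in the zonotope with center 0.5·(c1+c2) and generator matrix [0.5·(c1−c2), 0.5·(G1+G2'), 0.5·(G1−G2'), G2'']. -/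
open scoped Pointwise

/-- Matrix exponential. -/
noncomputable def mexp {n : ℕ} (A : Matrix (Fin n) (Fin n) ℝ) : Matrix (Fin n) (Fin n) ℝ :=
  NormedSpace.exp A

/-- Matrix-vector multiplication on Euclidean space. -/
noncomputable def mvE {m n : ℕ} (M : Matrix (Fin m) (Fin n) ℝ)
    (x : EuclideanSpace ℝ (Fin n)) : EuclideanSpace ℝ (Fin m) :=
  Matrix.toEuclideanLin M x

/-- Image of a set under a matrix: M·S = {M·s : s ∈ S}. -/
noncomputable def imgM {m n : ℕ} (M : Matrix (Fin m) (Fin n) ℝ)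
    (S : Set (EuclideanSpace ℝ (Fin n))) : Set (EuclideanSpace ℝ (Fin m)) :=
  mvE M '' S

/-- Zonotope with center `c` and generator matrix `G`. -/
noncomputable def zono {n p : ℕ} (c : EuclideanSpace ℝ (Fin n))
    (G : Matrix (Fin n) (Fin p) ℝ) : Set (EuclideanSpace ℝ (Fin n)) :=
  {x | ∃ α : EuclideanSpace ℝ (Fin p), (∀ i, α i ∈ Set.Icc (-1 : ℝ) 1) ∧ x = c + mvE G α}

/-- Linear combination of two sets. -/
def linComb {n : ℕ} (S1 S2 : Set (EuclideanSpace ℝ (Fin n))) :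
    Set (EuclideanSpace ℝ (Fin n)) :=
  {x | ∃ s1 ∈ S1, ∃ s2 ∈ S2, ∃ lam ∈ Set.Icc (0 : ℝ) 1, x = lam • s1 + (1 - lam) • s2}

/-- Tightest axis-aligned interval enclosure of a set. -/
noncomputable def box {n : ℕ} (S : Set (EuclideanSpace ℝ (Fin n))) :
    Set (EuclideanSpace ℝ (Fin n)) :=
  {x | ∀ i, x i ∈ Set.Icc (sInf ((fun y => y i) '' S)) (sSup ((fun y => y i) '' S))}

/-- Radius of the smallest origin-centered enclosing hypersphere. -/
noncomputable def rad {n : ℕ} (S : Set (EuclideanSpace ℝ (Fin n))) : ℝ :=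
  sSup ((fun x => ‖x‖) '' S)

/-- err(S) = rad(box(S)). -/
noncomputable def err {n : ℕ} (S : Set (EuclideanSpace ℝ (Fin n))) : ℝ := rad (box S)

/-- Spectral norm (operator 2-norm) of a matrix. -/
noncomputable def specNorm {m n : ℕ} (M : Matrix (Fin m) (Fin n) ℝ) : ℝ :=
  ‖LinearMap.toContinuousLinearMap (Matrix.toEuclideanLin M)‖

/-- Particular solution set P_U(t). -/
noncomputable def PU {n : ℕ} (U0 : Set (EuclideanSpace ℝ (Fin n)))
    (A : Matrix (Fin n) (Fin n) ℝ) (t : ℝ) : Set (EuclideanSpace ℝ (Fin n)) :=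
  {x | ∃ u : ℝ → EuclideanSpace ℝ (Fin n), Measurable u ∧ (∀ θ ∈ Set.Icc 0 t, u θ ∈ U0) ∧
    x = ∫ θ in (0 : ℝ)..t, mvE (mexp ((t - θ) • A)) (u θ)}

/-- Entrywise integral ∫₀^t e^{A·σ} dσ of the matrix exponential. -/
noncomputable def intExp {n : ℕ} (A : Matrix (Fin n) (Fin n) ℝ) (t : ℝ) :
    Matrix (Fin n) (Fin n) ℝ :=
  Matrix.of fun i j => ∫ σ in (0 : ℝ)..t, mexp (σ • A) i j

/-- Entrywise absolute value of a matrix. -/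
def entAbs {m n : ℕ} (M : Matrix (Fin m) (Fin n) ℝ) : Matrix (Fin m) (Fin n) ℝ :=
  Matrix.of fun i j => |M i j|

/-- Exponential remainder matrix E(Δt,η). -/
noncomputable def Eexp {n : ℕ} (A : Matrix (Fin n) (Fin n) ℝ) (dt : ℝ) (η : ℕ) :
    Matrix (Fin n) (Fin n) ℝ :=
  mexp (dt • entAbs A) -
    ∑ i ∈ Finset.range (η + 1), ((Nat.factorial i : ℝ)⁻¹) • (dt • entAbs A) ^ i

/-- Ã_i = A^i·Δt^{i+1}/(i+1)!. -/
noncomputable def Atilde {n : ℕ} (A : Matrix (Fin n) (Fin n) ℝ) (dt : ℝ) (i : ℕ) :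
    Matrix (Fin n) (Fin n) ℝ :=
  (dt ^ (i + 1) / (Nat.factorial (i + 1) : ℝ)) • A ^ i

/-- D(Δt) = {Δt·M·u : |M| ≤ E(Δt,η) entrywise, u ∈ U₀}. -/
noncomputable def Dset {n : ℕ} (A : Matrix (Fin n) (Fin n) ℝ) (dt : ℝ) (η : ℕ)
    (U0 : Set (EuclideanSpace ℝ (Fin n))) : Set (EuclideanSpace ℝ (Fin n)) :=
  {x | ∃ M : Matrix (Fin n) (Fin n) ℝ, (∀ i j, |M i j| ≤ Eexp A dt η i j) ∧
    ∃ u ∈ U0, x = dt • mvE M u}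

/-- P̂(Δt) = Ã_0·U₀ ⊕ … ⊕ Ã_η·U₀ ⊕ D(Δt). -/
noncomputable def PhatSet {n : ℕ} (A : Matrix (Fin n) (Fin n) ℝ) (dt : ℝ) (η : ℕ)
    (U0 : Set (EuclideanSpace ℝ (Fin n))) : Set (EuclideanSpace ℝ (Fin n)) :=
  (∑ i ∈ Finset.range (η + 1), imgM (Atilde A dt i) U0) + Dset A dt η U0

/-- One-step accumulating error bound ε̂(Δt). -/
noncomputable def ehatStep {n : ℕ} (A : Matrix (Fin n) (Fin n) ℝ) (t : ℝ) (η : ℕ)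
    (U0 : Set (EuclideanSpace ℝ (Fin n))) (dt : ℝ) : ℝ :=
  err (imgM (mexp (t • A)) (imgM (∑ i ∈ Finset.Icc 1 η, Atilde A dt i) U0 + Dset A dt η U0)) +
  err (imgM (mexp (t • A)) ((∑ i ∈ Finset.Icc 1 η, imgM (Atilde A dt i) U0) + Dset A dt η U0))

/-- Scalar interval I_i(Δt). -/
noncomputable def Iint (i : ℕ) (dt : ℝ) : Set ℝ :=
  Set.Icc (((i : ℝ) ^ (-(i : ℝ) / ((i : ℝ) - 1)) - (i : ℝ) ^ (-(1 : ℝ) / ((i : ℝ) - 1))) * dt ^ i) 0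

/-- Interval matrix F_x(Δt). -/
noncomputable def Fx {n : ℕ} (A : Matrix (Fin n) (Fin n) ℝ) (η : ℕ) (dt : ℝ) :
    Set (Matrix (Fin n) (Fin n) ℝ) :=
  {M | ∃ τ : ℕ → ℝ, (∀ i ∈ Finset.Icc 2 η, τ i ∈ Iint i dt) ∧
    ∃ R : Matrix (Fin n) (Fin n) ℝ, (∀ i j, |R i j| ≤ Eexp A dt η i j) ∧
    M = (∑ i ∈ Finset.Icc 2 η, (τ i / (Nat.factorial i : ℝ)) • A ^ i) + R}

/-- Interval matrix F_u(Δt). -/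
noncomputable def Fu {n : ℕ} (A : Matrix (Fin n) (Fin n) ℝ) (η : ℕ) (dt : ℝ) :
    Set (Matrix (Fin n) (Fin n) ℝ) :=
  {N | ∃ τ : ℕ → ℝ, (∀ i ∈ Finset.Icc 2 (η + 1), τ i ∈ Iint i dt) ∧
    ∃ R : Matrix (Fin n) (Fin n) ℝ, (∀ i j, |R i j| ≤ Eexp A dt η i j) ∧
    N = (∑ i ∈ Finset.Icc 2 (η + 1), (τ i / (Nat.factorial i : ℝ)) • A ^ (i - 1)) + dt • R}

/-- Curvature enclosure set C(Δt). -/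
noncomputable def Cset {n p : ℕ} (A : Matrix (Fin n) (Fin n) ℝ) (η : ℕ) (dt : ℝ)
    (ch : EuclideanSpace ℝ (Fin n)) (Gh : Matrix (Fin n) (Fin p) ℝ)
    (utld : EuclideanSpace ℝ (Fin n)) : Set (EuclideanSpace ℝ (Fin n)) :=
  {y | ∃ M ∈ Fx A η dt, ∃ N ∈ Fu A η dt, ∃ x ∈ zono ch Gh, y = mvE M x + mvE N utld}

/-- ε_hom(Δt). -/
noncomputable def ehom {n p : ℕ} (A : Matrix (Fin n) (Fin n) ℝ) (η : ℕ)
    (ch : EuclideanSpace ℝ (Fin n)) (Gh : Matrix (Fin n) (Fin p) ℝ)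
    (utld : EuclideanSpace ℝ (Fin n)) (dt : ℝ) : ℝ :=
  2 * err (Cset A η dt ch Gh utld) + Real.sqrt p * specNorm ((mexp (dt • A) - 1) * Gh)

/-- ε_U(Δt) = err(e^{A·t}·P̂(Δt)). -/
noncomputable def errPhat {n : ℕ} (A : Matrix (Fin n) (Fin n) ℝ) (t : ℝ) (η : ℕ)
    (U0 : Set (EuclideanSpace ℝ (Fin n))) (dt : ℝ) : ℝ :=
  err (imgM (mexp (t • A)) (PhatSet A dt η U0))

/-!
Write the point as `λ (c₁ + G₁ α₁) + (1 - λ) (c₂ + G₂' α₂' + G₂'' α₂'')` and put `μ = 2λ - 1`.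
Then `λ c₁ + (1 - λ) c₂ = ½ (c₁ + c₂) + μ · ½ (c₁ - c₂)`, and the polarization identity
`A x + B y = ½ (A + B) (x + y) + ½ (A - B) (x - y)` with `x = λ α₁`, `y = (1 - λ) α₂'`
rewrites the first `p₁` generator terms; every new coefficient `λ a ± (1 - λ) b` is a convex
combination of points of `[-1, 1]`.
-/

lemma Fin.sum_univ_castLE_add_addNat {M : Type*} [AddCommMonoid M] {p q : ℕ} (h : p ≤ q)
    (f : Fin q → M) :
    ∑ j, f j = ∑ j : Fin p, f (Fin.castLE h j) +
      ∑ j : Fin (q - p), f (Fin.cast (Nat.sub_add_cancel h) (j.addNat p)) := by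
  rw [← Fin.sum_congr' f (Nat.add_sub_cancel' h), Fin.sum_univ_add]
  congr 1
  exact Finset.sum_congr rfl fun j _ => congrArg f (Fin.ext (by simp [Nat.add_comm]))

section
variable {m n : ℕ}

lemma mvE_apply (M : Matrix (Fin m) (Fin n) ℝ) (x : EuclideanSpace ℝ (Fin n)) (i : Fin m) :
    mvE M x i = ∑ j, M i j * x j := by
  simp [mvE, Matrix.mulVec, dotProduct]

lemma mvE_smul (M : Matrix (Fin m) (Fin n) ℝ) (c : ℝ) (x : EuclideanSpace ℝ (Fin n)) :
    mvE M (c • x) = c • mvE M x := map_smul _ c x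

lemma mvE_add_mvE_eq_half (A B : Matrix (Fin m) (Fin n) ℝ) (x y : EuclideanSpace ℝ (Fin n)) :
    mvE A x + mvE B y =
      mvE ((0.5 : ℝ) • (A + B)) (x + y) + mvE ((0.5 : ℝ) • (A - B)) (x - y) := by
  simp only [mvE, map_add, map_sub, map_smul, LinearMap.add_apply, LinearMap.sub_apply,
    LinearMap.smul_apply]
  module

lemma mvE_eq_castLE_add_addNat {p : ℕ} (h : p ≤ n) (G : Matrix (Fin m) (Fin n) ℝ)
    (α : EuclideanSpace ℝ (Fin n)) :
    mvE G α =
      mvE (Matrix.of fun i j => G i (Fin.castLE h j))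
          (WithLp.toLp 2 fun j => α (Fin.castLE h j)) +
        mvE (Matrix.of fun i (j : Fin (n - p)) => G i (Fin.cast (Nat.sub_add_cancel h) (j.addNat p)))
          (WithLp.toLp 2 fun j => α (Fin.cast (Nat.sub_add_cancel h) (j.addNat p))) := by
  ext i
  simp only [PiLp.add_apply, mvE_apply, Matrix.of_apply]
  exact Fin.sum_univ_castLE_add_addNat h _

end

lemma convex_combo_mem_Icc_neg_one_one {lam a b : ℝ} (hlam : lam ∈ Set.Icc (0 : ℝ) 1)
    (ha : a ∈ Set.Icc (-1 : ℝ) 1) (hb : b ∈ Set.Icc (-1 : ℝ) 1) :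
    lam * a + (1 - lam) * b ∈ Set.Icc (-1 : ℝ) 1 :=
  convex_Icc (-1 : ℝ) 1 ha hb hlam.1 (sub_nonneg.2 hlam.2) (by ring)

/-- enclosure of the linear combination of two zonotopes. -/
theorem linComb_zono_subset {n p1 p2 : ℕ} (h : p1 ≤ p2)
    (c1 c2 : EuclideanSpace ℝ (Fin n))
    (G1 : Matrix (Fin n) (Fin p1) ℝ) (G2 : Matrix (Fin n) (Fin p2) ℝ) :
    linComb (zono c1 G1) (zono c2 G2) ⊆
      {x | ∃ lam : ℝ, ∃ β γ : EuclideanSpace ℝ (Fin p1),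
        ∃ δ : EuclideanSpace ℝ (Fin (p2 - p1)),
        lam ∈ Set.Icc (-1 : ℝ) 1 ∧ (∀ i, β i ∈ Set.Icc (-1 : ℝ) 1) ∧
        (∀ i, γ i ∈ Set.Icc (-1 : ℝ) 1) ∧ (∀ i, δ i ∈ Set.Icc (-1 : ℝ) 1) ∧
        x = (0.5 : ℝ) • (c1 + c2) + lam • ((0.5 : ℝ) • (c1 - c2))
          + mvE ((0.5 : ℝ) • (G1 + Matrix.of fun i j => G2 i (Fin.castLE h j))) β
          + mvE ((0.5 : ℝ) • (G1 - Matrix.of fun i j => G2 i (Fin.castLE h j))) γ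
          + mvE (Matrix.of fun i (j : Fin (p2 - p1)) =>
              G2 i (Fin.cast (Nat.sub_add_cancel h) (j.addNat p1))) δ} := by
  rintro _ ⟨_, ⟨α1, hα1, rfl⟩, _, ⟨α2, hα2, rfl⟩, lam, hlam, rfl⟩
  rw [mvE_eq_castLE_add_addNat h G2 α2]
  set α2' : EuclideanSpace ℝ (Fin p1) := WithLp.toLp 2 fun j => α2 (Fin.castLE h j)
  set α2'' : EuclideanSpace ℝ (Fin (p2 - p1)) :=
    WithLp.toLp 2 fun j => α2 (Fin.cast (Nat.sub_add_cancel h) (j.addNat p1))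
  refine ⟨2 * lam - 1, lam • α1 + (1 - lam) • α2', lam • α1 - (1 - lam) • α2',
    (1 - lam) • α2'', ⟨by linarith [hlam.1], by linarith [hlam.2]⟩, fun j => ?_, fun j => ?_,
    fun j => ?_, ?_⟩
  · exact convex_combo_mem_Icc_neg_one_one hlam (hα1 j) (hα2 _)
  · have hneg : -α2 (Fin.castLE h j) ∈ Set.Icc (-1 : ℝ) 1 := by
      rw [Set.neg_mem_Icc_iff, neg_neg]
      exact hα2 (Fin.castLE h j)
    simpa [sub_eq_add_neg] using convex_combo_mem_Icc_neg_one_one hlam (hα1 j) hneg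
  · simpa using convex_combo_mem_Icc_neg_one_one hlam (a := 0) (by norm_num) (hα2 _)
  · have key := mvE_add_mvE_eq_half G1 (Matrix.of fun i j => G2 i (Fin.castLE h j))
      (lam • α1) ((1 - lam) • α2')
    rw [mvE_smul, mvE_smul] at key
    rw [mvE_smul]
    linear_combination (norm := module) key
end

section
/- Let U₀ ⊆ ℝ^n be nonempty and compact and A ∈ ℝ^{n×n}. Then for all s, t ≥ 0 the particular solution set satisfies the decomposition P_U(s+t) = P_U(s) ⊕ e^{A·s}·P_U(t), where ⊕ denotes the Minkowski sum and e^{A·s}·P_U(t) = {e^{A·s}·x : x ∈ P_U(t)}. -/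
open scoped Pointwise

/-!
Split the integral defining `P_U(s + t)` at time `t`. On `[0, t]` the semigroup law
`e^{(s+t-θ)A} = e^{sA} e^{(t-θ)A}` pulls `e^{sA}` out of the integral, leaving an element of
`P_U(t)`; on `[t, s + t]` the shift `θ ↦ θ + t` leaves an element of `P_U(s)` driven by the
shifted input. Conversely, inputs realizing points of `P_U(t)` and `P_U(s)` are concatenated.
-/

open MeasureTheory Set

section ParticularSolutionSet

variable {E F : Type*} [NormedAddCommGroup E] [NormedSpace ℝ E] [MeasurableSpace E] [BorelSpace E]
  [SecondCountableTopology E] [NormedAddCommGroup F] [NormedSpace ℝ F]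

lemma intervalIntegrable_apply_of_isBounded {L : ℝ → E →L[ℝ] F} (hL : Continuous L)
    {u : ℝ → E} (hu : Measurable u) {U : Set E} (hU : Bornology.IsBounded U) {a b : ℝ}
    (hab : a ≤ b) (hmem : ∀ θ ∈ Icc a b, u θ ∈ U) :
    IntervalIntegrable (fun θ => L θ (u θ)) volume a b := by
  obtain ⟨C, hC⟩ := hU.exists_norm_le
  obtain ⟨K, hK⟩ := isCompact_Icc.exists_bound_of_continuousOn hL.continuousOn (s := Icc a b)
  have hmeas : AEStronglyMeasurable (fun θ => L θ (u θ)) volume :=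
    isBoundedBilinearMap_apply.continuous.comp_aestronglyMeasurable
      (hL.aestronglyMeasurable.prodMk hu.aestronglyMeasurable)
  rw [intervalIntegrable_iff_integrableOn_Icc_of_le hab]
  refine Measure.integrableOn_of_bounded (M := K * C) measure_Icc_lt_top.ne hmeas ?_
  filter_upwards [ae_restrict_mem measurableSet_Icc] with θ hθ
  exact (L θ).le_of_opNorm_le_of_le (hK θ hθ) (hC _ (hmem θ hθ))

noncomputable def duhamelIntegral (Φ : ℝ → E →L[ℝ] E) (u : ℝ → E) (t : ℝ) : E :=
  ∫ θ in (0 : ℝ)..t, Φ (t - θ) (u θ)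

def particularSolutionSet (Φ : ℝ → E →L[ℝ] E) (U : Set E) (t : ℝ) : Set E :=
  {x | ∃ u : ℝ → E, Measurable u ∧ (∀ θ ∈ Icc 0 t, u θ ∈ U) ∧ x = duhamelIntegral Φ u t}

variable [CompleteSpace E] {Φ : ℝ → E →L[ℝ] E} {U : Set E}

lemma duhamelIntegral_add (hΦ : ∀ a b, Φ (a + b) = Φ a * Φ b) (hΦc : Continuous Φ)
    (hU : Bornology.IsBounded U) {s t : ℝ} (hs : 0 ≤ s) (ht : 0 ≤ t) {u : ℝ → E}
    (hu : Measurable u) (hmem : ∀ θ ∈ Icc 0 (s + t), u θ ∈ U) :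
    duhamelIntegral Φ u (s + t) =
      duhamelIntegral Φ (fun θ => u (θ + t)) s + Φ s (duhamelIntegral Φ u t) := by
  unfold duhamelIntegral
  have hint (c a b : ℝ) (hab : a ≤ b) (ha : 0 ≤ a) (hb : b ≤ s + t) :
      IntervalIntegrable (fun θ => Φ (c - θ) (u θ)) volume a b :=
    intervalIntegrable_apply_of_isBounded (hΦc.comp (continuous_sub_left c)) hu hU hab
      fun θ hθ => hmem θ ⟨ha.trans hθ.1, hθ.2.trans hb⟩
  have hfront : ∫ θ in (0 : ℝ)..t, Φ (s + t - θ) (u θ) =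
      Φ s (∫ θ in (0 : ℝ)..t, Φ (t - θ) (u θ)) := by
    rw [← (Φ s).intervalIntegral_comp_comm (hint t 0 t ht le_rfl (by linarith))]
    refine intervalIntegral.integral_congr fun θ _ => ?_
    rw [add_sub_assoc, hΦ]
    rfl
  have hback : ∫ θ in t..s + t, Φ (s + t - θ) (u θ) =
      ∫ θ in (0 : ℝ)..s, Φ (s - θ) (u (θ + t)) := by
    have := intervalIntegral.integral_comp_add_right (fun θ => Φ (s + t - θ) (u θ)) t
      (a := 0) (b := s)
    simpa only [zero_add, add_sub_add_right_eq_sub] using this.symm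
  rw [← intervalIntegral.integral_add_adjacent_intervals (hint _ 0 t ht le_rfl (by linarith))
    (hint _ t (s + t) (by linarith) ht le_rfl), hfront, hback, add_comm]

theorem particularSolutionSet_add (hΦ : ∀ a b, Φ (a + b) = Φ a * Φ b) (hΦc : Continuous Φ)
    (hU : Bornology.IsBounded U) {s t : ℝ} (hs : 0 ≤ s) (ht : 0 ≤ t) :
    particularSolutionSet Φ U (s + t) =
      particularSolutionSet Φ U s + Φ s '' particularSolutionSet Φ U t := by
  apply Subset.antisymm
  · rintro _ ⟨u, hu, hmem, rfl⟩
    rw [duhamelIntegral_add hΦ hΦc hU hs ht hu hmem]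
    refine add_mem_add ⟨fun θ => u (θ + t), hu.comp (measurable_add_const t),
      fun θ hθ => hmem _ ⟨by linarith [hθ.1], by linarith [hθ.2]⟩, rfl⟩
      (mem_image_of_mem _ ⟨u, hu, fun θ hθ => hmem θ ⟨hθ.1, by linarith [hθ.2]⟩, rfl⟩)
  · rintro _ ⟨_, ⟨u₁, hu₁, hmem₁, rfl⟩, _, ⟨_, ⟨u₂, hu₂, hmem₂, rfl⟩, rfl⟩, rfl⟩
    classical
    let u : ℝ → E := fun θ => if θ ≤ t then u₂ θ else u₁ (θ - t)
    have hu : Measurable u := hu₂.ite measurableSet_Iic (hu₁.comp (measurable_sub_const t))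
    have hmem : ∀ θ ∈ Icc 0 (s + t), u θ ∈ U := by
      intro θ hθ
      by_cases hθt : θ ≤ t
      · simpa only [u, if_pos hθt] using hmem₂ θ ⟨hθ.1, hθt⟩
      · simpa only [u, if_neg hθt] using hmem₁ (θ - t) ⟨by linarith, by linarith [hθ.2]⟩
    refine ⟨u, hu, hmem, ?_⟩
    rw [duhamelIntegral_add hΦ hΦc hU hs ht hu hmem]
    congr 1
    · unfold duhamelIntegral
      refine intervalIntegral.integral_congr_Ioo_of_le hs fun θ hθ => ?_
      have : ¬θ + t ≤ t := by linarith [hθ.1]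
      simp only [u, if_neg this, add_sub_cancel_right]
    · unfold duhamelIntegral
      refine congrArg (Φ s) (intervalIntegral.integral_congr fun θ hθ => ?_)
      rw [uIcc_of_le ht] at hθ
      simp only [u, if_pos hθ.2]

end ParticularSolutionSet

section MatrixExponential

variable {n : ℕ}

noncomputable def mexpFlow (A : Matrix (Fin n) (Fin n) ℝ) (τ : ℝ) :
    EuclideanSpace ℝ (Fin n) →L[ℝ] EuclideanSpace ℝ (Fin n) :=
  Matrix.toEuclideanCLM (𝕜 := ℝ) (mexp (τ • A))

lemma mexpFlow_add (A : Matrix (Fin n) (Fin n) ℝ) (a b : ℝ) :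
    mexpFlow A (a + b) = mexpFlow A a * mexpFlow A b := by
  rw [mexpFlow, mexpFlow, mexpFlow, ← map_mul, mexp, mexp, mexp, add_smul,
    Matrix.exp_add_of_commute _ _ (((Commute.refl A).smul_left a).smul_right b)]

open scoped Matrix.Norms.L2Operator in
lemma continuous_mexpFlow (A : Matrix (Fin n) (Fin n) ℝ) : Continuous (mexpFlow A) := by
  have hexp : Continuous fun τ : ℝ => mexp (τ • A) :=
    continuous_iff_continuousAt.2 fun τ => (hasDerivAt_exp_smul_const (𝕂 := ℝ) A τ).continuousAt
  exact (LinearMap.continuous_of_finiteDimensional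
    (Matrix.toEuclideanCLM (n := Fin n) (𝕜 := ℝ)).toAlgEquiv.toLinearMap).comp hexp

lemma PU_eq_particularSolutionSet (U0 : Set (EuclideanSpace ℝ (Fin n)))
    (A : Matrix (Fin n) (Fin n) ℝ) (t : ℝ) :
    PU U0 A t = particularSolutionSet (mexpFlow A) U0 t :=
  rfl

lemma imgM_mexp_eq_image (A : Matrix (Fin n) (Fin n) ℝ) (s : ℝ)
    (S : Set (EuclideanSpace ℝ (Fin n))) : imgM (mexp (s • A)) S = mexpFlow A s '' S :=
  rfl

end MatrixExponential

theorem PU_decomposition_general {n : ℕ} (U0 : Set (EuclideanSpace ℝ (Fin n)))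
    (hcomp : IsCompact U0)
    (A : Matrix (Fin n) (Fin n) ℝ) (s t : ℝ) (hs : 0 ≤ s) (ht : 0 ≤ t) :
    PU U0 A (s + t) = PU U0 A s + imgM (mexp (s • A)) (PU U0 A t) := by
  simp only [PU_eq_particularSolutionSet, imgM_mexp_eq_image]
  exact particularSolutionSet_add (mexpFlow_add A) (continuous_mexpFlow A) hcomp.isBounded hs ht

/-- semigroup decomposition of the particular solution set,
`P_U(s + t) = P_U(s) ⊕ e^{A·s}·P_U(t)`. -/
theorem PU_decomposition {n : ℕ} (U0 : Set (EuclideanSpace ℝ (Fin n)))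
    (hne : U0.Nonempty) (hcomp : IsCompact U0)
    (A : Matrix (Fin n) (Fin n) ℝ) (s t : ℝ) (hs : 0 ≤ s) (ht : 0 ≤ t) :
    PU U0 A (s + t) = PU U0 A s + imgM (mexp (s • A)) (PU U0 A t) :=
  PU_decomposition_general U0 hcomp A s t hs ht
end

section
/- Let A ∈ ℝ^{n×n}, Δt > 0, and let η ≥ 0 be an integer. Then the matrix ∫₀^{Δt} e^{A·σ} dσ − Σ_{i=0}^{η} A^i·Δt^{i+1}/(i+1)! has entrywise absolute value bounded by Δt·E(Δt,η), i.e., |∫₀^{Δt} e^{A·σ} dσ − Σ_{i=0}^{η} A^i·Δt^{i+1}/(i+1)!| ≤ Δt·E(Δt,η) entrywise. -/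
open scoped Pointwise

/-! On `[0, Δt]` the Taylor remainder `e^{σA} - ∑_{k ≤ η} σ^k A^k / k!` is the tail
`∑_{k > η} σ^k A^k / k!` of the exponential series. Since `|(A^k)ᵢⱼ| ≤ (|A|^k)ᵢⱼ`, this tail is
dominated entrywise, term by term, by `∑_{k > η} Δt^k |A|^k / k! = E(Δt, η)`. Integrating the
Taylor polynomial termwise gives `∑_{k ≤ η} A^k Δt^{k+1} / (k+1)!`, so the quantity to bound is
the integral over `[0, Δt]` of the remainder, which is at most `Δt · E(Δt, η)`. -/

open NormedSpace Finset
open scoped Nat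

section

variable {n : ℕ}

theorem abs_pow_apply_le_entAbs_pow (M : Matrix (Fin n) (Fin n) ℝ) (k : ℕ) (i j : Fin n) :
    |(M ^ k) i j| ≤ (entAbs M ^ k) i j := by
  induction k generalizing j with
  | zero => by_cases h : i = j <;> simp [h]
  | succ k ih =>
    simp only [pow_succ, Matrix.mul_apply]
    refine (abs_sum_le_sum_abs _ _).trans (sum_le_sum fun l _ => ?_)
    rw [abs_mul]
    exact mul_le_mul (ih l) le_rfl (abs_nonneg _) ((abs_nonneg _).trans (ih l))

/- Matrices carry no global norm: the scoped `L^∞` operator norm makes them a complete normed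
`ℚ`-algebra whose topology is the entrywise one, so the exponential series converges entrywise. -/
theorem hasSum_mexp_smul_apply (A : Matrix (Fin n) (Fin n) ℝ) (t : ℝ) (i j : Fin n) :
    HasSum (fun k => t ^ k / k ! * (A ^ k) i j) (mexp (t • A) i j) := by
  have h : HasSum (fun k => ((k ! : ℚ)⁻¹ • (t • A) ^ k) i j) (mexp (t • A) i j) :=
    open scoped Matrix.Norms.Operator in
    Pi.hasSum.mp (Pi.hasSum.mp (exp_series_hasSum_exp' (𝕂 := ℚ) (t • A)) i) j
  convert h using 2 with k
  simp only [smul_pow, Matrix.smul_apply, smul_eq_mul, Rat.smul_def, Rat.cast_inv,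
    Rat.cast_natCast]
  ring

theorem continuous_mexp_smul_apply (A : Matrix (Fin n) (Fin n) ℝ) (i j : Fin n) :
    Continuous fun σ : ℝ => mexp (σ • A) i j := by
  unfold mexp
  open scoped Matrix.Norms.Operator in fun_prop

theorem hasSum_mexp_smul_sub_taylor_apply (A : Matrix (Fin n) (Fin n) ℝ) (t : ℝ) (η : ℕ)
    (i j : Fin n) :
    HasSum (fun k => t ^ (k + (η + 1)) / (k + (η + 1))! * (A ^ (k + (η + 1))) i j)
      (mexp (t • A) i j - ∑ k ∈ range (η + 1), t ^ k / k ! * (A ^ k) i j) :=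
  (hasSum_nat_add_iff' (η + 1)).mpr (hasSum_mexp_smul_apply A t i j)

theorem Eexp_apply (A : Matrix (Fin n) (Fin n) ℝ) (dt : ℝ) (η : ℕ) (i j : Fin n) :
    Eexp A dt η i j =
      mexp (dt • entAbs A) i j - ∑ k ∈ range (η + 1), dt ^ k / k ! * (entAbs A ^ k) i j := by
  simp only [Eexp, Matrix.sub_apply, Matrix.sum_apply, smul_pow, Matrix.smul_apply, smul_eq_mul]
  congr 1
  exact sum_congr rfl fun k _ => by ring

theorem abs_mexp_smul_sub_taylor_apply_le (A : Matrix (Fin n) (Fin n) ℝ) {σ dt : ℝ}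
    (hσ : σ ∈ Set.Icc 0 dt) (η : ℕ) (i j : Fin n) :
    |mexp (σ • A) i j - ∑ k ∈ range (η + 1), σ ^ k / k ! * (A ^ k) i j| ≤ Eexp A dt η i j := by
  rw [Eexp_apply]
  refine (hasSum_mexp_smul_sub_taylor_apply A σ η i j).norm_le_of_bounded
    (hasSum_mexp_smul_sub_taylor_apply (entAbs A) dt η i j) fun k => ?_
  obtain ⟨hσ0, hσdt⟩ := hσ
  rw [Real.norm_eq_abs, abs_mul, abs_div, abs_pow, abs_of_nonneg hσ0, Nat.abs_cast]
  have hdt : 0 ≤ dt := hσ0.trans hσdt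
  gcongr
  exact abs_pow_apply_le_entAbs_pow A _ i j

theorem integral_pow_div_factorial (t : ℝ) (k : ℕ) :
    ∫ σ in (0 : ℝ)..t, σ ^ k / k ! = t ^ (k + 1) / (k + 1)! := by
  rw [intervalIntegral.integral_div, integral_pow, Nat.factorial_succ]
  push_cast
  field_simp
  ring

theorem intExp_sub_taylor_apply (A : Matrix (Fin n) (Fin n) ℝ) (dt : ℝ) (η : ℕ) (i j : Fin n) :
    (intExp A dt - ∑ k ∈ range (η + 1), (dt ^ (k + 1) / (k + 1)!) • A ^ k) i j =
      ∫ σ in (0 : ℝ)..dt, (mexp (σ • A) i j - ∑ k ∈ range (η + 1), σ ^ k / k ! * (A ^ k) i j) := by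
  have hterm : ∀ k ∈ range (η + 1),
      IntervalIntegrable (fun σ : ℝ => σ ^ k / k ! * (A ^ k) i j) MeasureTheory.volume 0 dt :=
    fun k _ => Continuous.intervalIntegrable (by fun_prop) _ _
  have htaylor : Continuous fun σ : ℝ => ∑ k ∈ range (η + 1), σ ^ k / k ! * (A ^ k) i j := by
    fun_prop
  rw [intervalIntegral.integral_sub ((continuous_mexp_smul_apply A i j).intervalIntegrable _ _)
    (htaylor.intervalIntegrable _ _), intervalIntegral.integral_finsetSum hterm]
  simp only [intExp, Matrix.sub_apply, Matrix.of_apply, Matrix.sum_apply, Matrix.smul_apply,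
    smul_eq_mul, intervalIntegral.integral_mul_const, integral_pow_div_factorial]

end

/-- entrywise remainder bound for the integrated matrix exponential. -/
theorem intExp_taylor_remainder_le {n : ℕ} (A : Matrix (Fin n) (Fin n) ℝ)
    (dt : ℝ) (hdt : 0 < dt) (η : ℕ) :
    ∀ i j, |(intExp A dt -
        ∑ k ∈ Finset.range (η + 1),
          (dt ^ (k + 1) / (Nat.factorial (k + 1) : ℝ)) • A ^ k) i j| ≤
      dt * Eexp A dt η i j := by
  intro i j
  rw [intExp_sub_taylor_apply, ← Real.norm_eq_abs]
  refine (intervalIntegral.norm_integral_le_of_norm_le_const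
    (C := Eexp A dt η i j) fun σ hσ => ?_).trans_eq
    (by rw [sub_zero, abs_of_pos hdt, mul_comm])
  rw [Set.uIoc_of_le hdt.le] at hσ
  exact abs_mexp_smul_sub_taylor_apply_le A ⟨hσ.1.le, hσ.2⟩ η i j
end

section
/- Let U₀ ⊆ ℝ^n be nonempty and compact, A ∈ ℝ^{n×n}, and let 0 = t_0 < t_1 < … < t_{k+1} be time points with Δt_j = t_{j+1} − t_j. For each j ∈ {0,…,k}, let Q_j ⊆ ℝ^n be nonempty and bounded with d_H( e^{A·t_j}·P_U(Δt_j), e^{A·t_j}·Q_j ) ≤ ε_j. Define P̂_U(t_0) = {0} and P̂_U(t_{j+1}) = P̂_U(t_j) ⊕ e^{A·t_j}·Q_j. Then d_H( P_U(t_{k+1}), P̂_U(t_{k+1}) ) ≤ Σ_{j=0}^{k} ε_j. -/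
open scoped Pointwise

/-! Splitting the integral defining `P_U(a + b)` at `b` and shifting its tail to `[0, a]` gives
the semigroup identity `P_U(a + b) = P_U(a) ⊕ e^{aA}·P_U(b)`. With `a = t_j`,
`b = Δt_j` this is the recursion defining `P̂_U`, with `e^{A t_j}·P_U(Δt_j)` in place of
`e^{A t_j}·Q_j`. The Hausdorff distance is subadditive under Minkowski sums, so the one-step
errors `ε_j` add up along the recursion. -/

open Metric Set MeasureTheory

section MinkowskiSum

variable {E : Type*} [SeminormedAddCommGroup E]

theorem infEDist_add_add_le {x y : E} {s t : Set E} :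
    infEDist (x + y) (s + t) ≤ infEDist x s + infEDist y t := by
  simp_rw [infEDist, ENNReal.iInf_add, ENNReal.add_iInf]
  refine le_iInf₂ fun a ha => le_iInf₂ fun b hb => ?_
  exact (iInf₂_le (a + b) (add_mem_add ha hb)).trans (edist_add_add_le x y a b)

theorem hausdorffEDist_add_add_le (s t u v : Set E) :
    hausdorffEDist (s + u) (t + v) ≤ hausdorffEDist s t + hausdorffEDist u v := by
  refine hausdorffEDist_le_of_infEDist ?_ ?_
  · rintro _ ⟨x, hx, y, hy, rfl⟩
    exact infEDist_add_add_le.trans <| add_le_add (infEDist_le_hausdorffEDist_of_mem hx)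
      (infEDist_le_hausdorffEDist_of_mem hy)
  · rintro _ ⟨x, hx, y, hy, rfl⟩
    rw [hausdorffEDist_comm, hausdorffEDist_comm (s := u)]
    exact infEDist_add_add_le.trans <| add_le_add (infEDist_le_hausdorffEDist_of_mem hx)
      (infEDist_le_hausdorffEDist_of_mem hy)

theorem hausdorffDist_le_sum_of_add_steps {P P' R R' : ℕ → Set E} {ε : ℕ → ℝ} (m : ℕ)
    (h0 : P 0 = P' 0) (hP : ∀ j < m, P (j + 1) = P j + R j)
    (hP' : ∀ j < m, P' (j + 1) = P' j + R' j) (hR : ∀ j < m, hausdorffEDist (R j) (R' j) ≠ ⊤)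
    (hε : ∀ j < m, hausdorffDist (R j) (R' j) ≤ ε j) :
    hausdorffDist (P m) (P' m) ≤ ∑ j ∈ Finset.range m, ε j := by
  have hε0 : ∀ j < m, 0 ≤ ε j := fun j hj => hausdorffDist_nonneg.trans (hε j hj)
  have hsum0 : ∀ i ≤ m, 0 ≤ ∑ j ∈ Finset.range i, ε j := fun i hi =>
    Finset.sum_nonneg fun j hj => hε0 j ((Finset.mem_range.1 hj).trans_le hi)
  have key : ∀ i ≤ m,
      hausdorffEDist (P i) (P' i) ≤ ENNReal.ofReal (∑ j ∈ Finset.range i, ε j) := by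
    intro i hi
    induction i with
    | zero => simp [h0, hausdorffEDist_self]
    | succ i ih =>
      have hi' : i < m := by omega
      rw [hP i hi', hP' i hi', Finset.sum_range_succ,
        ENNReal.ofReal_add (hsum0 i hi'.le) (hε0 i hi')]
      exact (hausdorffEDist_add_add_le _ _ _ _).trans <| add_le_add (ih hi'.le)
        ((ENNReal.le_ofReal_iff_toReal_le (hR i hi') (hε0 i hi')).2 (hε i hi'))
  exact ENNReal.toReal_le_of_le_ofReal (hsum0 m le_rfl) (key m le_rfl)

end MinkowskiSum

section ParticularSolution

variable {n : ℕ}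

theorem mvE_mul (M N : Matrix (Fin n) (Fin n) ℝ) (x : EuclideanSpace ℝ (Fin n)) :
    mvE (M * N) x = mvE M (mvE N x) := by
  simp [mvE]

theorem isBounded_imgM (M : Matrix (Fin n) (Fin n) ℝ) {S : Set (EuclideanSpace ℝ (Fin n))}
    (hS : Bornology.IsBounded S) : Bornology.IsBounded (imgM M S) :=
  (Matrix.toEuclideanLin M).toContinuousLinearMap.lipschitz.isBounded_image hS

theorem intervalIntegral_mvE_comm (M : Matrix (Fin n) (Fin n) ℝ)
    {f : ℝ → EuclideanSpace ℝ (Fin n)} {c d : ℝ} (hf : IntervalIntegrable f volume c d) :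
    ∫ θ in c..d, mvE M (f θ) = mvE M (∫ θ in c..d, f θ) :=
  (Matrix.toEuclideanLin M).toContinuousLinearMap.intervalIntegral_comp_comm hf

variable (A : Matrix (Fin n) (Fin n) ℝ) {U0 : Set (EuclideanSpace ℝ (Fin n))}

theorem mexp_add_smul (a b : ℝ) : mexp ((a + b) • A) = mexp (a • A) * mexp (b • A) := by
  rw [mexp, mexp, mexp, add_smul]
  exact Matrix.exp_add_of_commute _ _ (((Commute.refl A).smul_left a).smul_right b)

theorem continuous_mvE_mexp (t : ℝ) :
    Continuous fun p : ℝ × EuclideanSpace ℝ (Fin n) => mvE (mexp ((t - p.1) • A)) p.2 := by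
  -- Matrices carry no global norm; any one induces their topology and makes `exp` continuous.
  have hexp : Continuous fun θ : ℝ => mexp ((t - θ) • A) := by
    open scoped Matrix.Norms.Operator in
    exact NormedSpace.exp_continuous.comp
      ((continuous_const.sub continuous_id).smul continuous_const)
  exact PiLp.continuous_toLp _ _ |>.comp <|
    (hexp.comp continuous_fst).matrix_mulVec ((PiLp.continuous_ofLp _ _).comp continuous_snd)

theorem exists_norm_mvE_mexp_le (hU : IsCompact U0) (t c d : ℝ) :
    ∃ C, ∀ θ ∈ uIcc c d, ∀ x ∈ U0, ‖mvE (mexp ((t - θ) • A)) x‖ ≤ C := by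
  obtain ⟨C, hC⟩ := (isCompact_uIcc.prod hU).exists_bound_of_continuousOn
    (continuous_mvE_mexp A t).continuousOn
  exact ⟨C, fun θ hθ x hx => hC (θ, x) ⟨hθ, hx⟩⟩

theorem intervalIntegrable_mvE_mexp (hU : IsCompact U0) (t : ℝ) {c d : ℝ}
    {u : ℝ → EuclideanSpace ℝ (Fin n)} (hu : Measurable u) (huU : ∀ θ ∈ uIcc c d, u θ ∈ U0) :
    IntervalIntegrable (fun θ => mvE (mexp ((t - θ) • A)) (u θ)) volume c d := by
  obtain ⟨C, hC⟩ := exists_norm_mvE_mexp_le A hU t c d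
  have hmeas : Measurable fun θ => mvE (mexp ((t - θ) • A)) (u θ) :=
    (continuous_mvE_mexp A t).measurable.comp (f := fun θ => (θ, u θ)) (measurable_id.prodMk hu)
  refine (intervalIntegrable_const (c := C)).mono_fun' hmeas.aestronglyMeasurable ?_
  refine (ae_restrict_iff' measurableSet_uIoc).2 (ae_of_all _ fun θ hθ => ?_)
  exact hC θ (uIoc_subset_uIcc hθ) _ (huU θ (uIoc_subset_uIcc hθ))

theorem PU_nonempty (hne : U0.Nonempty) (t : ℝ) : (PU U0 A t).Nonempty :=
  let ⟨c, hc⟩ := hne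
  ⟨_, fun _ => c, measurable_const, fun _ _ => hc, rfl⟩

theorem PU_zero (hne : U0.Nonempty) : PU U0 A 0 = {0} := by
  refine (PU_nonempty A hne 0).subset_singleton_iff.1 ?_
  rintro _ ⟨u, -, -, rfl⟩
  exact intervalIntegral.integral_same

theorem isBounded_PU (hU : IsCompact U0) {t : ℝ} (ht : 0 ≤ t) :
    Bornology.IsBounded (PU U0 A t) := by
  obtain ⟨C, hC⟩ := exists_norm_mvE_mexp_le A hU t 0 t
  refine isBounded_iff_forall_norm_le.2 ⟨C * |t - 0|, ?_⟩
  rintro _ ⟨u, -, huU, rfl⟩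
  refine intervalIntegral.norm_integral_le_of_norm_le_const fun θ hθ => ?_
  have hθ' := uIoc_subset_uIcc hθ
  exact hC θ hθ' _ (huU θ (by rwa [uIcc_of_le ht] at hθ'))

theorem integral_mvE_mexp_add (hU : IsCompact U0) {a b : ℝ} (ha : 0 ≤ a) (hb : 0 ≤ b)
    {u : ℝ → EuclideanSpace ℝ (Fin n)} (hu : Measurable u)
    (huU : ∀ θ ∈ Icc 0 (a + b), u θ ∈ U0) :
    ∫ θ in (0 : ℝ)..(a + b), mvE (mexp ((a + b - θ) • A)) (u θ) =
      (∫ σ in (0 : ℝ)..a, mvE (mexp ((a - σ) • A)) (u (σ + b))) +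
        mvE (mexp (a • A)) (∫ θ in (0 : ℝ)..b, mvE (mexp ((b - θ) • A)) (u θ)) := by
  have huU' : ∀ {c d}, 0 ≤ c → c ≤ d → d ≤ a + b → ∀ θ ∈ uIcc c d, u θ ∈ U0 :=
    fun hc hcd hd θ hθ => by
      rw [uIcc_of_le hcd] at hθ
      exact huU θ ⟨hc.trans hθ.1, hθ.2.trans hd⟩
  have hhead := intervalIntegrable_mvE_mexp A hU (a + b) hu (huU' le_rfl hb (by linarith))
  rw [← intervalIntegral.integral_add_adjacent_intervals hhead
    (intervalIntegrable_mvE_mexp A hU (a + b) hu (huU' hb (by linarith) le_rfl)), add_comm]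
  congr 1
  · have := intervalIntegral.integral_comp_add_right
      (fun θ => mvE (mexp ((a + b - θ) • A)) (u θ)) b (a := 0) (b := a)
    simp only [zero_add, add_sub_add_right_eq_sub] at this
    exact this.symm
  · rw [← intervalIntegral_mvE_comm _
      (intervalIntegrable_mvE_mexp A hU b hu (huU' le_rfl hb (by linarith)))]
    refine intervalIntegral.integral_congr fun θ _ => ?_
    rw [add_sub_assoc, mexp_add_smul, mvE_mul]

theorem PU_add (hU : IsCompact U0) {a b : ℝ} (ha : 0 ≤ a) (hb : 0 ≤ b) :
    PU U0 A (a + b) = PU U0 A a + imgM (mexp (a • A)) (PU U0 A b) := by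
  ext x
  constructor
  · rintro ⟨u, hu, huU, rfl⟩
    rw [integral_mvE_mexp_add A hU ha hb hu huU]
    refine add_mem_add ⟨fun σ => u (σ + b), hu.comp (measurable_add_const b),
      fun σ hσ => huU _ ⟨by linarith [hσ.1], by linarith [hσ.2]⟩, rfl⟩ (mem_image_of_mem _ ?_)
    exact ⟨u, hu, fun θ hθ => huU θ ⟨hθ.1, by linarith [hθ.2]⟩, rfl⟩
  · rw [mem_add]
    rintro ⟨_, ⟨w, hw, hwU, rfl⟩, _, ⟨_, ⟨v, hv, hvU, rfl⟩, rfl⟩, rfl⟩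
    set u : ℝ → EuclideanSpace ℝ (Fin n) := fun θ => if θ < b then v θ else w (θ - b)
    have hu : Measurable u := Measurable.ite (measurableSet_lt measurable_id measurable_const)
      hv (hw.comp (measurable_sub_const b))
    have huU : ∀ θ ∈ Icc 0 (a + b), u θ ∈ U0 := by
      intro θ hθ
      by_cases h : θ < b
      · simpa [u, h] using hvU θ ⟨hθ.1, h.le⟩
      · simpa [u, h] using hwU (θ - b) ⟨by linarith, by linarith [hθ.2]⟩
    refine ⟨u, hu, huU, ?_⟩
    rw [integral_mvE_mexp_add A hU ha hb hu huU]
    congr 1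
    · refine intervalIntegral.integral_congr_uIoo fun σ hσ => ?_
      rw [uIoo_of_le ha] at hσ
      simp [u, show ¬σ + b < b by linarith [hσ.1]]
    · congr 1
      refine intervalIntegral.integral_congr_uIoo fun θ hθ => ?_
      rw [uIoo_of_le hb] at hθ
      simp [u, hθ.2]

end ParticularSolution

/-- accumulation of the one-step errors of the particular solution. -/
theorem PU_accumulated_error {n : ℕ} (U0 : Set (EuclideanSpace ℝ (Fin n)))
    (hne : U0.Nonempty) (hcomp : IsCompact U0) (A : Matrix (Fin n) (Fin n) ℝ)
    (k : ℕ) (t : ℕ → ℝ) (ht0 : t 0 = 0) (htmono : ∀ j ≤ k, t j < t (j + 1))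
    (Q : ℕ → Set (EuclideanSpace ℝ (Fin n))) (ε : ℕ → ℝ)
    (hQne : ∀ j ≤ k, (Q j).Nonempty) (hQb : ∀ j ≤ k, Bornology.IsBounded (Q j))
    (hQ : ∀ j ≤ k,
      Metric.hausdorffDist (imgM (mexp (t j • A)) (PU U0 A (t (j + 1) - t j)))
        (imgM (mexp (t j • A)) (Q j)) ≤ ε j)
    (Phat : ℕ → Set (EuclideanSpace ℝ (Fin n)))
    (hP0 : Phat 0 = {0})
    (hPrec : ∀ j ≤ k, Phat (j + 1) = Phat j + imgM (mexp (t j • A)) (Q j)) :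
    Metric.hausdorffDist (PU U0 A (t (k + 1))) (Phat (k + 1)) ≤
      ∑ j ∈ Finset.range (k + 1), ε j := by
  have hdt : ∀ j ≤ k, 0 ≤ t (j + 1) - t j := fun j hj => sub_nonneg.2 (htmono j hj).le
  have ht : ∀ j ≤ k, 0 ≤ t j := by
    intro j hj
    induction j with
    | zero => exact ht0.ge
    | succ j ih => linarith [ih (by omega), hdt j (by omega)]
  refine hausdorffDist_le_sum_of_add_steps (P := fun j => PU U0 A (t j)) (k + 1)
    (by rw [ht0, hP0, PU_zero A hne]) (fun j hj => ?_) (fun j hj => hPrec j (by omega))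
    (fun j hj => ?_) (fun j hj => hQ j (by omega))
  · simpa only [add_sub_cancel] using PU_add A hcomp (ht j (by omega)) (hdt j (by omega))
  · exact hausdorffEDist_ne_top_of_nonempty_of_bounded ((PU_nonempty A hne _).image _)
      ((hQne j (by omega)).image _) (isBounded_imgM _ (isBounded_PU A hcomp (hdt j (by omega))))
      (isBounded_imgM _ (hQb j (by omega)))
end

section
/- Let U₀ ⊆ ℝ^n be a nonempty compact set, A ∈ ℝ^{n×n}, t ≥ 0, and let η ≥ 1 be an integer. For Δt > 0 set Ã_i = A^i·Δt^{i+1}/(i+1)!, D(Δt) = { Δt·M·u : M ∈ ℝ^{n×n} with |M| ≤ E(Δt,η) entrywise, u ∈ U₀ }, and define the one-step accumulating error ε̂(Δt) = err( e^{A·t}·( (Σ_{i=1}^{η} Ã_i)·U₀ ⊕ D(Δt) ) ) + err( e^{A·t}·( Ã_1·U₀ ⊕ … ⊕ Ã_η·U₀ ⊕ D(Δt) ) ). Then ε̂(Δt) → 0 as Δt → 0⁺ and ε̂(Δt) = O(Δt²) as Δt → 0⁺, i.e., there exist constants c > 0 and δ > 0 with ε̂(Δt) ≤ c·Δt² for all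 Δt ∈ (0,δ). -/
open scoped Pointwise

/-! Every set in `ε̂(Δt)` is an `e^{A t}`-image of a Minkowski sum whose summands have radius
`O(Δt²)`: `Ã_i = O(Δt^{i+1})` with `i ≥ 1`, and the tail of the exponential series gives
`‖E(Δt,η)‖ ≤ (Δt ‖|A|‖)^{η+1} e^{‖|A|‖}` with `η ≥ 1`; the boundedness of `U₀` transfers these
bounds to the sets. Finally `err S ≤ √n · sup_{x ∈ S} ‖x‖`, since `box S` lies in the cube of that
half-width, and `(Σ Ã_i)·U₀ ⊕ D ⊆ Ã_1·U₀ ⊕ … ⊕ Ã_η·U₀ ⊕ D`, so one bound serves both terms. -/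

open Finset Nat

theorem norm_exp_sub_sum_range_le {𝔸 : Type*} [NormedRing 𝔸] [NormedAlgebra ℝ 𝔸]
    [CompleteSpace 𝔸] (x : 𝔸) (N : ℕ) :
    ‖NormedSpace.exp x - ∑ i ∈ range (N + 1), ((i ! : ℝ)⁻¹) • x ^ i‖
      ≤ ‖x‖ ^ (N + 1) * Real.exp ‖x‖ := by
  have htail : NormedSpace.exp x - ∑ i ∈ range (N + 1), ((i ! : ℝ)⁻¹) • x ^ i
      = ∑' k, (((k + (N + 1))! : ℝ)⁻¹) • x ^ (k + (N + 1)) := by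
    rw [congrFun (NormedSpace.exp_eq_tsum ℝ) x,
      ← (NormedSpace.expSeries_summable' x).sum_add_tsum_nat_add, add_sub_cancel_left]
  have hsum : HasSum (fun k => ‖x‖ ^ (N + 1) * (‖x‖ ^ k / k !)) (‖x‖ ^ (N + 1) * Real.exp ‖x‖) := by
    rw [Real.exp_eq_exp_ℝ]
    exact (NormedSpace.expSeries_div_hasSum_exp ‖x‖).mul_left _
  rw [htail]
  refine tsum_of_norm_bounded hsum fun k => ?_
  rw [norm_smul, Real.norm_of_nonneg (by positivity)]
  calc ((k + (N + 1))! : ℝ)⁻¹ * ‖x ^ (k + (N + 1))‖ ≤ (k ! : ℝ)⁻¹ * ‖x‖ ^ (k + (N + 1)) := by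
        gcongr
        · exact Nat.le_add_right k _
        · exact norm_pow_le' x (by omega)
    _ = ‖x‖ ^ (N + 1) * (‖x‖ ^ k / k !) := by ring

theorem norm_le_sum_of_mem_finsetSum {ι E : Type*} [SeminormedAddCommGroup E] {s : Finset ι}
    {f : ι → Set E} {b : ι → ℝ} (hb : ∀ i ∈ s, ∀ x ∈ f i, ‖x‖ ≤ b i) {x : E}
    (hx : x ∈ ∑ i ∈ s, f i) : ‖x‖ ≤ ∑ i ∈ s, b i := by
  obtain ⟨g, hg, rfl⟩ := (Set.mem_finsetSum s f x).mp hx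
  exact (norm_sum_le _ _).trans (sum_le_sum fun i hi => hb i hi _ (hg hi))

section Euclidean

variable {n : ℕ}

theorem norm_le_sqrt_mul_of_abs_apply_le {x : EuclideanSpace ℝ (Fin n)} {r : ℝ} (hr : 0 ≤ r)
    (hx : ∀ i, |x i| ≤ r) : ‖x‖ ≤ √n * r := by
  calc ‖x‖ = √(∑ i, ‖x i‖ ^ 2) := EuclideanSpace.norm_eq x
    _ ≤ √(∑ _i : Fin n, r ^ 2) := by
        gcongr with i
        exact hx i
    _ = √n * r := by
        rw [sum_const, Finset.card_univ, Fintype.card_fin, nsmul_eq_mul,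
          Real.sqrt_mul n.cast_nonneg, Real.sqrt_sq hr]

theorem abs_apply_le_of_mem_box {S : Set (EuclideanSpace ℝ (Fin n))} {r : ℝ} (hr : 0 ≤ r)
    (hS : ∀ x ∈ S, ‖x‖ ≤ r) {y : EuclideanSpace ℝ (Fin n)} (hy : y ∈ box S) (i : Fin n) :
    |y i| ≤ r := by
  have hcoord : ∀ x ∈ S, |x i| ≤ r := fun x hx => (PiLp.norm_apply_le x i).trans (hS x hx)
  have hsup : sSup ((fun x => x i) '' S) ≤ r :=
    Real.sSup_le (by rintro - ⟨x, hx, rfl⟩; exact (abs_le.mp (hcoord x hx)).2) hr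
  have hinf : -r ≤ sInf ((fun x => x i) '' S) :=
    Real.le_sInf (by rintro - ⟨x, hx, rfl⟩; exact (abs_le.mp (hcoord x hx)).1) (by linarith)
  exact abs_le.mpr ⟨hinf.trans (hy i).1, (hy i).2.trans hsup⟩

theorem err_nonneg (S : Set (EuclideanSpace ℝ (Fin n))) : 0 ≤ err S :=
  Real.sSup_nonneg (by rintro - ⟨x, -, rfl⟩; exact norm_nonneg x)

theorem err_le_sqrt_mul {S : Set (EuclideanSpace ℝ (Fin n))} {r : ℝ} (hr : 0 ≤ r)
    (hS : ∀ x ∈ S, ‖x‖ ≤ r) : err S ≤ √n * r :=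
  Real.sSup_le (by
    rintro - ⟨y, hy, rfl⟩
    exact norm_le_sqrt_mul_of_abs_apply_le hr (abs_apply_le_of_mem_box hr hS hy))
    (by positivity)

theorem imgM_sum_subset_sum_imgM {ι : Type*} (s : Finset ι) (M : ι → Matrix (Fin n) (Fin n) ℝ)
    (S : Set (EuclideanSpace ℝ (Fin n))) : imgM (∑ i ∈ s, M i) S ⊆ ∑ i ∈ s, imgM (M i) S := by
  rintro - ⟨u, hu, rfl⟩
  have : mvE (∑ i ∈ s, M i) u = ∑ i ∈ s, mvE (M i) u := by
    simp only [mvE, map_sum, LinearMap.sum_apply]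
  rw [this]
  exact Set.finsetSum_mem_finsetSum s _ _ fun i _ => ⟨u, hu, rfl⟩

end Euclidean

section LinftyOpNorm

-- The ℓ∞ operator norm is submultiplicative and monotone under entrywise domination.
attribute [local instance] Matrix.linftyOpNormedAddCommGroup Matrix.linftyOpNormedRing
  Matrix.linftyOpNormedAlgebra

open scoped Matrix

theorem Matrix.linfty_opNorm_le_of_abs_apply_le {m n : Type*} [Fintype m] [Fintype n]
    {M P : Matrix m n ℝ} (h : ∀ i j, |M i j| ≤ P i j) : ‖M‖ ≤ ‖P‖ := by
  rw [Matrix.linfty_opNorm_def, Matrix.linfty_opNorm_def, NNReal.coe_le_coe]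
  refine Finset.sup_mono_fun fun i _ => sum_le_sum fun j _ => ?_
  rw [← NNReal.coe_le_coe, coe_nnnorm, coe_nnnorm, Real.norm_eq_abs, Real.norm_eq_abs]
  exact (h i j).trans (le_abs_self _)

variable {n : ℕ}

theorem norm_mvE_le (M : Matrix (Fin n) (Fin n) ℝ) (x : EuclideanSpace ℝ (Fin n)) :
    ‖mvE M x‖ ≤ √n * (‖M‖ * ‖x‖) := by
  refine norm_le_sqrt_mul_of_abs_apply_le (by positivity) fun i => ?_
  calc |mvE M x i| = ‖(M *ᵥ x.ofLp) i‖ := rfl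
    _ ≤ ‖M *ᵥ x.ofLp‖ := norm_le_pi_norm _ i
    _ ≤ ‖M‖ * ‖x.ofLp‖ := Matrix.linfty_opNorm_mulVec M _
    _ ≤ ‖M‖ * ‖x‖ := by
        gcongr
        exact pi_norm_le_iff_of_nonneg (norm_nonneg x) |>.mpr (PiLp.norm_apply_le x)

theorem norm_le_of_mem_imgM {M : Matrix (Fin n) (Fin n) ℝ} {S : Set (EuclideanSpace ℝ (Fin n))}
    {r : ℝ} (hS : ∀ x ∈ S, ‖x‖ ≤ r) : ∀ y ∈ imgM M S, ‖y‖ ≤ √n * (‖M‖ * r) := by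
  rintro - ⟨x, hx, rfl⟩
  exact (norm_mvE_le M x).trans (by gcongr; exact hS x hx)

theorem err_imgM_le {M : Matrix (Fin n) (Fin n) ℝ} {S : Set (EuclideanSpace ℝ (Fin n))}
    {r : ℝ} (hr : 0 ≤ r) (hS : ∀ x ∈ S, ‖x‖ ≤ r) : err (imgM M S) ≤ n * (‖M‖ * r) := by
  calc err (imgM M S) ≤ √n * (√n * (‖M‖ * r)) :=
        err_le_sqrt_mul (by positivity) (norm_le_of_mem_imgM hS)
    _ = n * (‖M‖ * r) := by rw [← mul_assoc, Real.mul_self_sqrt n.cast_nonneg]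

variable (A : Matrix (Fin n) (Fin n) ℝ) {dt : ℝ}

theorem norm_Atilde_le (hdt : dt ∈ Set.Icc 0 1) {i : ℕ} (hi : 1 ≤ i) :
    ‖Atilde A dt i‖ ≤ ‖A‖ ^ i * dt ^ 2 := by
  obtain ⟨hdt0, hdt1⟩ := hdt
  rw [Atilde, norm_smul, Real.norm_of_nonneg (by positivity), mul_comm]
  gcongr
  · exact norm_pow_le' A (by omega)
  · calc dt ^ (i + 1) / ((i + 1)! : ℝ) ≤ dt ^ (i + 1) :=
          div_le_self (by positivity) (Nat.one_le_cast.mpr (i + 1).factorial_pos)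
      _ ≤ dt ^ 2 := pow_le_pow_of_le_one hdt0 hdt1 (by omega)

theorem norm_Eexp_le (hdt : dt ∈ Set.Icc 0 1) {η : ℕ} (hη : 1 ≤ η) :
    ‖Eexp A dt η‖ ≤ ‖entAbs A‖ ^ (η + 1) * Real.exp ‖entAbs A‖ * dt ^ 2 := by
  obtain ⟨hdt0, hdt1⟩ := hdt
  have hnorm : ‖dt • entAbs A‖ = dt * ‖entAbs A‖ := by
    rw [norm_smul, Real.norm_of_nonneg hdt0]
  calc ‖Eexp A dt η‖ ≤ ‖dt • entAbs A‖ ^ (η + 1) * Real.exp ‖dt • entAbs A‖ :=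
        norm_exp_sub_sum_range_le _ η
    _ = dt ^ (η + 1) * ‖entAbs A‖ ^ (η + 1) * Real.exp (dt * ‖entAbs A‖) := by
        rw [hnorm, mul_pow]
    _ ≤ dt ^ 2 * ‖entAbs A‖ ^ (η + 1) * Real.exp (1 * ‖entAbs A‖) := by
        gcongr ?_ * _ * Real.exp (?_ * _)
        exact pow_le_pow_of_le_one hdt0 hdt1 (by omega)
    _ = ‖entAbs A‖ ^ (η + 1) * Real.exp ‖entAbs A‖ * dt ^ 2 := by ring_nf

theorem norm_le_of_mem_Dset {U0 : Set (EuclideanSpace ℝ (Fin n))} {r : ℝ}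
    (hU : ∀ u ∈ U0, ‖u‖ ≤ r) (hdt : dt ∈ Set.Icc 0 1) (η : ℕ) :
    ∀ x ∈ Dset A dt η U0, ‖x‖ ≤ √n * (‖Eexp A dt η‖ * r) := by
  rintro - ⟨M, hM, u, hu, rfl⟩
  calc ‖dt • mvE M u‖ = dt * ‖mvE M u‖ := by rw [norm_smul, Real.norm_of_nonneg hdt.1]
    _ ≤ ‖mvE M u‖ := mul_le_of_le_one_left (norm_nonneg _) hdt.2
    _ ≤ √n * (‖M‖ * ‖u‖) := norm_mvE_le M u
    _ ≤ √n * (‖Eexp A dt η‖ * r) := by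
        gcongr
        exacts [Matrix.linfty_opNorm_le_of_abs_apply_le hM, hU u hu]

theorem norm_le_of_mem_sum_imgM_Atilde_add_Dset {U0 : Set (EuclideanSpace ℝ (Fin n))} {r : ℝ}
    (hr : 0 ≤ r) (hU : ∀ u ∈ U0, ‖u‖ ≤ r) (hdt : dt ∈ Set.Icc 0 1) {η : ℕ} (hη : 1 ≤ η) :
    ∀ x ∈ (∑ i ∈ Icc 1 η, imgM (Atilde A dt i) U0) + Dset A dt η U0, ‖x‖ ≤
      √n * ((∑ i ∈ Icc 1 η, ‖A‖ ^ i + ‖entAbs A‖ ^ (η + 1) * Real.exp ‖entAbs A‖) * r) *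
        dt ^ 2 := by
  rintro - ⟨a, ha, b, hb, rfl⟩
  have ha' := norm_le_sum_of_mem_finsetSum (fun i _ => norm_le_of_mem_imgM hU) ha
  refine (norm_add_le_of_le ha' (norm_le_of_mem_Dset A hU hdt η b hb)).trans ?_
  calc ∑ i ∈ Icc 1 η, √n * (‖Atilde A dt i‖ * r) + √n * (‖Eexp A dt η‖ * r)
      ≤ ∑ i ∈ Icc 1 η, √n * (‖A‖ ^ i * dt ^ 2 * r) +
          √n * (‖entAbs A‖ ^ (η + 1) * Real.exp ‖entAbs A‖ * dt ^ 2 * r) := by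
        gcongr with i hi
        · exact norm_Atilde_le A hdt (mem_Icc.mp hi).1
        · exact norm_Eexp_le A hdt hη
    _ = _ := by simp only [← Finset.mul_sum, ← Finset.sum_mul]; ring

theorem exists_ehatStep_le_mul_sq {U0 : Set (EuclideanSpace ℝ (Fin n))}
    (hU0 : Bornology.IsBounded U0) (t : ℝ) {η : ℕ} (hη : 1 ≤ η) :
    ∃ c, ∀ dt ∈ Set.Icc (0 : ℝ) 1, ehatStep A t η U0 dt ≤ c * dt ^ 2 := by
  obtain ⟨r, hr, hU⟩ := hU0.exists_pos_norm_le
  set B := √n * ((∑ i ∈ Icc 1 η, ‖A‖ ^ i + ‖entAbs A‖ ^ (η + 1) * Real.exp ‖entAbs A‖) * r)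
  refine ⟨2 * (n * (‖mexp (t • A)‖ * B)), fun dt hdt => ?_⟩
  have hB : 0 ≤ B * dt ^ 2 := by positivity
  have hsum := norm_le_of_mem_sum_imgM_Atilde_add_Dset A hr.le hU hdt hη
  have hprod : ∀ x ∈ imgM (∑ i ∈ Icc 1 η, Atilde A dt i) U0 + Dset A dt η U0,
      ‖x‖ ≤ B * dt ^ 2 := fun x hx =>
    hsum x (Set.add_subset_add (imgM_sum_subset_sum_imgM _ _ _) subset_rfl hx)
  calc ehatStep A t η U0 dt
      ≤ n * (‖mexp (t • A)‖ * (B * dt ^ 2)) + n * (‖mexp (t • A)‖ * (B * dt ^ 2)) :=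
        add_le_add (err_imgM_le hB hprod) (err_imgM_le hB hsum)
    _ = 2 * (n * (‖mexp (t • A)‖ * B)) * dt ^ 2 := by ring

end LinftyOpNorm

theorem ehatStep_limit_and_order_general {n : ℕ} (U0 : Set (EuclideanSpace ℝ (Fin n)))
    (hcomp : IsCompact U0) (A : Matrix (Fin n) (Fin n) ℝ)
    (t : ℝ) (η : ℕ) (hη : 1 ≤ η) :
    Filter.Tendsto (fun dt => ehatStep A t η U0 dt)
      (nhdsWithin 0 (Set.Ioi 0)) (nhds 0) ∧
    ∃ c > (0 : ℝ), ∃ δ > (0 : ℝ), ∀ dt ∈ Set.Ioo (0 : ℝ) δ,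
      ehatStep A t η U0 dt ≤ c * dt ^ 2 := by
  obtain ⟨c, hc⟩ := exists_ehatStep_le_mul_sq A hcomp.isBounded t hη
  have hsmall : ∀ dt ∈ Set.Ioo (0 : ℝ) 1, ehatStep A t η U0 dt ≤ max c 1 * dt ^ 2 :=
    fun dt hdt => (hc dt (Set.Ioo_subset_Icc_self hdt)).trans (by gcongr; exact le_max_left c 1)
  refine ⟨?_, max c 1, lt_max_of_lt_right one_pos, 1, one_pos, hsmall⟩
  have hquadratic : Filter.Tendsto (fun dt : ℝ => max c 1 * dt ^ 2) (nhds 0) (nhds 0) :=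
    (continuous_const.mul (continuous_pow 2)).tendsto' 0 0 (by simp)
  exact squeeze_zero'
    (Filter.Eventually.of_forall fun dt => add_nonneg (err_nonneg _) (err_nonneg _))
    (Filter.eventually_of_mem (Ioo_mem_nhdsGT one_pos) hsmall)
    (hquadratic.mono_left nhdsWithin_le_nhds)

/-- the one-step accumulating error `ε̂(Δt)` tends to 0 and is `O(Δt²)`. -/
theorem ehatStep_limit_and_order {n : ℕ} (U0 : Set (EuclideanSpace ℝ (Fin n)))
    (hne : U0.Nonempty) (hcomp : IsCompact U0) (A : Matrix (Fin n) (Fin n) ℝ)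
    (t : ℝ) (ht : 0 ≤ t) (η : ℕ) (hη : 1 ≤ η) :
    Filter.Tendsto (fun dt => ehatStep A t η U0 dt)
      (nhdsWithin 0 (Set.Ioi 0)) (nhds 0) ∧
    ∃ c > (0 : ℝ), ∃ δ > (0 : ℝ), ∀ dt ∈ Set.Ioo (0 : ℝ) δ,
      ehatStep A t η U0 dt ≤ c * dt ^ 2 :=
  ehatStep_limit_and_order_general U0 hcomp A t η hη
end

section
/- Let Z = {c + G·α : α ∈ [-1,1]^p} ⊆ ℝ^n be a zonotope and let P = conv{v_1, …, v_s} ⊆ ℝ^n be the convex hull of finitely many points v_1, …, v_s (s ≥ 1). Then the Minkowski difference Z ⊖ P = {x ∈ ℝ^n : ∀ y ∈ P, x + y ∈ Z} equals the constrained zonotope { (c − v_1) + G·α¹ : α¹ ∈ [-1,1]^p and there exist α², …, α^s ∈ [-1,1]^p such that G·α¹ − G·α^j = v_1 − v_j for all j ∈ {2,…,s} }. -/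
open scoped Pointwise

/- Since `Z` is convex, `x + y ∈ Z` for all `y ∈ conv V` as soon as it holds on the vertices, so
`Z ⊖ conv{v_j} = ⋂_j (Z - v_j)`. Choosing a parameter `α_j` with `x + v_j = c + G α_j` for each `j`
and eliminating `x` through `j = 1` gives the constrained zonotope. -/

theorem forall_mem_convexHull_add_mem_iff {𝕜 E : Type*} [Field 𝕜] [LinearOrder 𝕜]
    [IsStrictOrderedRing 𝕜] [AddCommGroup E] [Module 𝕜 E] {S : Set E} (hS : Convex 𝕜 S)
    (V : Set E) (x : E) :
    (∀ y ∈ convexHull 𝕜 V, x + y ∈ S) ↔ ∀ y ∈ V, x + y ∈ S :=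
  ⟨fun h y hy => h y (subset_convexHull 𝕜 V hy),
    fun h => convexHull_min h (hS.translate_preimage_right x)⟩

theorem convex_zono {n p : ℕ} (c : EuclideanSpace ℝ (Fin n)) (G : Matrix (Fin n) (Fin p) ℝ) :
    Convex ℝ (zono c G) := by
  rintro _ ⟨α, hα, rfl⟩ _ ⟨β, hβ, rfl⟩ a b ha hb hab
  refine ⟨a • α + b • β, fun i => convex_Icc (-1 : ℝ) 1 (hα i) (hβ i) ha hb hab, ?_⟩
  simp only [mvE, map_add, map_smul]
  match_scalars <;> simp [hab]

/-- the Minkowski difference of a zonotope and a polytope in vertex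
representation is a constrained zonotope. -/
theorem minkowski_diff_zono_polytope {n p s : ℕ} (hs : 1 ≤ s)
    (c : EuclideanSpace ℝ (Fin n)) (G : Matrix (Fin n) (Fin p) ℝ)
    (v : Fin s → EuclideanSpace ℝ (Fin n)) :
    {x : EuclideanSpace ℝ (Fin n) |
        ∀ y ∈ convexHull ℝ (Set.range v), x + y ∈ zono c G} =
      {x : EuclideanSpace ℝ (Fin n) | ∃ α : Fin s → EuclideanSpace ℝ (Fin p),
        (∀ j i, α j i ∈ Set.Icc (-1 : ℝ) 1) ∧
        (∀ j, mvE G (α ⟨0, hs⟩) - mvE G (α j) = v ⟨0, hs⟩ - v j) ∧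
        x = (c - v ⟨0, hs⟩) + mvE G (α ⟨0, hs⟩)} := by
  ext x
  simp only [Set.mem_ofPred_eq, forall_mem_convexHull_add_mem_iff (convex_zono c G),
    Set.forall_mem_range]
  constructor
  · intro hx
    choose α hα hxα using hx
    refine ⟨α, hα, fun j => ?_, ?_⟩
    · linear_combination (norm := module) hxα j - hxα ⟨0, hs⟩
    · linear_combination (norm := module) hxα ⟨0, hs⟩
  · rintro ⟨α, hα, hdiff, rfl⟩ j
    exact ⟨α j, hα j, by linear_combination (norm := module) hdiff j⟩
end
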